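/- arXiv:2505.04118 — 2 statements merged into one kernel-verified Lean document; each statement's English description precedes it below -/
import Mathlib

section
/- Let ρ : ℝ≥0 → ℝ≥0 be non-decreasing with ρ(t) → ∞ as t → ∞, ρ(0) = 0, and ρ(t) = 1 for all t ∈ (0,1]. Define ρ̃(t) = min(√t / 2, ρ(√t / 2)). Then ρ̃ is non-decreasing, ρ̃(t) → ∞ as t → ∞, and for every n ∈ ℕ and every tuple (t₁,…,tₙ) of non-negative reals, one has ∑ᵢ ρ(tᵢ) ≥ ρ̃(∑ᵢ tᵢ). -/
open scoped NNReal
open Finset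

section

variable {ι : Type*} [Fintype ι] {ρ : ℝ≥0 → ℝ≥0}

theorem one_le_apply_of_ne_zero (hmono : Monotone ρ)
    (h1 : ∀ t : ℝ≥0, 0 < t → t ≤ 1 → ρ t = 1) {t : ℝ≥0} (ht : t ≠ 0) : 1 ≤ ρ t :=
  (h1 _ (lt_min (pos_iff_ne_zero.2 ht) one_pos) (min_le_right _ _)).ge.trans
    (hmono (min_le_left _ _))

theorem card_support_le_sum (hρ : ∀ t, t ≠ 0 → 1 ≤ ρ t) (t : ι → ℝ≥0) :
    (#{i | t i ≠ 0} : ℝ≥0) ≤ ∑ i, ρ (t i) :=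
  calc (#{i | t i ≠ 0} : ℝ≥0) = ∑ i with t i ≠ 0, 1 := by simp
    _ ≤ ∑ i with t i ≠ 0, ρ (t i) := sum_le_sum fun i hi ↦ hρ _ (mem_filter.1 hi).2
    _ ≤ ∑ i, ρ (t i) := sum_le_sum_of_subset (filter_subset _ _)

theorem sum_le_card_support_mul {t : ι → ℝ≥0} {s : ℝ≥0} (hts : ∀ i, t i ≤ s) :
    ∑ i, t i ≤ #{i | t i ≠ 0} * s := by
  rw [← sum_filter_ne_zero, ← nsmul_eq_mul]
  exact sum_le_card_nsmul _ _ _ fun i _ ↦ hts i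

/-- Either one `tᵢ` already reaches `s`, or every `tᵢ` is below `s`; then `s * s ≤ ∑ tᵢ` forces
at least `s` of them to be nonzero, each contributing at least `1`. -/
theorem min_le_sum_of_mul_self_le (hmono : Monotone ρ) (hρ : ∀ t, t ≠ 0 → 1 ≤ ρ t)
    (t : ι → ℝ≥0) {s : ℝ≥0} (hs : s * s ≤ ∑ i, t i) : min s (ρ s) ≤ ∑ i, ρ (t i) := by
  by_cases hbig : ∃ i, s ≤ t i
  · obtain ⟨i, hi⟩ := hbig
    calc min s (ρ s) ≤ ρ s := min_le_right _ _
      _ ≤ ρ (t i) := hmono hi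
      _ ≤ ∑ j, ρ (t j) := single_le_sum (f := fun j ↦ ρ (t j)) (fun _ _ ↦ zero_le) (mem_univ i)
  push Not at hbig
  rcases eq_zero_or_pos s with rfl | hs0
  · simp
  have hs_le_card : s ≤ #{i | t i ≠ 0} :=
    le_of_mul_le_mul_right (hs.trans (sum_le_card_support_mul fun i ↦ (hbig i).le)) hs0
  exact (min_le_left _ _).trans (hs_le_card.trans (card_support_le_sum hρ t))

end

theorem sqrt_div_two_mul_self_le (T : ℝ≥0) : NNReal.sqrt T / 2 * (NNReal.sqrt T / 2) ≤ T := by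
  rw [div_mul_div_comm, NNReal.mul_self_sqrt]
  exact div_le_self zero_le (by norm_num)

theorem monotone_sqrt_div_two : Monotone fun t : ℝ≥0 ↦ NNReal.sqrt t / 2 :=
  fun _ _ h ↦ div_le_div_of_nonneg_right (NNReal.sqrt.monotone h) zero_le

theorem tendsto_sqrt_div_two_atTop :
    Filter.Tendsto (fun t : ℝ≥0 ↦ NNReal.sqrt t / 2) Filter.atTop Filter.atTop :=
  NNReal.sqrt.tendsto_atTop.atTop_div_const two_pos

theorem subadditivity_lemma_general (ρ : ℝ≥0 → ℝ≥0) (hmono : Monotone ρ)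
    (htop : Filter.Tendsto ρ Filter.atTop Filter.atTop)
    (h1 : ∀ t : ℝ≥0, 0 < t → t ≤ 1 → ρ t = 1) :
    Monotone (fun t : ℝ≥0 => min (NNReal.sqrt t / 2) (ρ (NNReal.sqrt t / 2))) ∧
    Filter.Tendsto (fun t : ℝ≥0 => min (NNReal.sqrt t / 2) (ρ (NNReal.sqrt t / 2)))
      Filter.atTop Filter.atTop ∧
    ∀ (n : ℕ) (t : Fin n → ℝ≥0),
      min (NNReal.sqrt (∑ i, t i) / 2) (ρ (NNReal.sqrt (∑ i, t i) / 2)) ≤ ∑ i, ρ (t i) :=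
  ⟨monotone_sqrt_div_two.min (hmono.comp monotone_sqrt_div_two),
    Filter.tendsto_inf_atTop _ tendsto_sqrt_div_two_atTop (htop.comp tendsto_sqrt_div_two_atTop),
    fun _ t ↦ min_le_sum_of_mul_self_le hmono (fun _ ↦ one_le_apply_of_ne_zero hmono h1) t
      (sqrt_div_two_mul_self_le _)⟩

/-- Subadditivity lemma: from a normalized lower control `ρ` one builds
`ρ̃(t) = min(√t/2, ρ(√t/2))`, which is non-decreasing, tends to infinity, and satisfies
`∑ ρ(tᵢ) ≥ ρ̃(∑ tᵢ)` for all finite tuples of non-negative reals. -/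
theorem subadditivity_lemma (ρ : ℝ≥0 → ℝ≥0) (hmono : Monotone ρ)
    (htop : Filter.Tendsto ρ Filter.atTop Filter.atTop)
    (h0 : ρ 0 = 0) (h1 : ∀ t : ℝ≥0, 0 < t → t ≤ 1 → ρ t = 1) :
    Monotone (fun t : ℝ≥0 => min (NNReal.sqrt t / 2) (ρ (NNReal.sqrt t / 2))) ∧
    Filter.Tendsto (fun t : ℝ≥0 => min (NNReal.sqrt t / 2) (ρ (NNReal.sqrt t / 2)))
      Filter.atTop Filter.atTop ∧
    ∀ (n : ℕ) (t : Fin n → ℝ≥0),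
      min (NNReal.sqrt (∑ i, t i) / 2) (ρ (NNReal.sqrt (∑ i, t i) / 2)) ≤ ∑ i, ρ (t i) :=
  subadditivity_lemma_general ρ hmono htop h1
end

section
/- Let {B_i}_{i∈I} be a family of uniformly convex Banach spaces indexed by an arbitrary (possibly uncountable) set I, possessing a common modulus of convexity δ(ε) > 0 (i.e., each B_i has modulus of convexity δ_i with δ_i(ε) ≥ δ(ε) for all ε > 0). Then for 1 < p < ∞, the ℓᵖ-direct sum B = (⊕_{i∈I} B_i)_{ℓᵖ}, with norm ‖b‖ = (∑_{i∈I} ‖b_i‖^p)^{1/p}, is uniformly convex. -/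
open scoped ENNReal

/-!
Write `q = p.toReal`. For every `ε > 0` the common modulus yields a single `η > 0` such that in
every `B i`
  `‖x + y‖ ^ q + η ‖x - y‖ ^ q ≤ (2 ^ (q - 1) + η ε ^ q) (‖x‖ ^ q + ‖y‖ ^ q)`.
When `‖x - y‖ ^ q < ε ^ q (‖x‖ ^ q + ‖y‖ ^ q)` this is the power-mean inequality; otherwise
`‖x + y‖ ^ q` falls short of `2 ^ (q - 1) (‖x‖ ^ q + ‖y‖ ^ q)` by a fixed factor `θ < 1`: by
strict convexity of `t ↦ t ^ q` when `‖x‖` and `‖y‖` are far apart, and by the common modulus when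
they are close.
The inequality is linear in the `q`-th powers of the norms, so summing it over `i` gives it in
`lp B p`. On the unit sphere it reads `‖x + y‖ ^ q ≤ 2 ^ q - η (‖x - y‖ ^ q - 2 ε ^ q)`, which
keeps `‖x + y‖` uniformly below `2` once `ε` is small compared with `‖x - y‖`.
-/

theorem Real.rpow_add_le_mul_rpow_add_rpow {a b q : ℝ} (ha : 0 ≤ a) (hb : 0 ≤ b) (hq : 1 ≤ q) :
    (a + b) ^ q ≤ 2 ^ (q - 1) * (a ^ q + b ^ q) := by
  lift a to NNReal using ha
  lift b to NNReal using hb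
  exact_mod_cast NNReal.rpow_add_le_mul_rpow_add_rpow a b hq

theorem Real.one_add_rpow_lt_mul_one_add_rpow {q t : ℝ} (hq : 1 < q) (ht : 0 ≤ t)
    (ht1 : t ≠ 1) :
    (1 + t) ^ q < 2 ^ (q - 1) * (1 + t ^ q) := by
  have hmid : ((1 + t) / 2) ^ q < (1 + t ^ q) / 2 := by
    have := (strictConvexOn_rpow hq).2 (Set.mem_Ici.2 zero_le_one) (Set.mem_Ici.2 ht) ht1.symm
      one_half_pos one_half_pos (add_halves 1)
    simp only [smul_eq_mul, Real.one_rpow] at this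
    calc ((1 + t) / 2) ^ q = (1 / 2 * 1 + 1 / 2 * t) ^ q := by ring_nf
      _ < _ := this
      _ = (1 + t ^ q) / 2 := by ring
  rw [Real.div_rpow (by positivity) zero_le_two, div_lt_iff₀ (by positivity)] at hmid
  rw [Real.rpow_sub_one two_ne_zero]
  linarith

theorem exists_lt_one_forall_one_add_rpow_le {q c : ℝ} (hq : 1 < q) (hc : 0 < c) :
    ∃ θ < 1, ∀ t ∈ Set.Icc 0 (1 - c), (1 + t) ^ q ≤ θ * (2 ^ (q - 1) * (1 + t ^ q)) := by
  rcases (Set.Icc (0 : ℝ) (1 - c)).eq_empty_or_nonempty with hempty | hne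
  · exact ⟨0, zero_lt_one, by simp [hempty]⟩
  have hpos : ∀ t : ℝ, 0 ≤ t → 0 < 2 ^ (q - 1) * (1 + t ^ q) := fun t ht => by positivity
  set f : ℝ → ℝ := fun t => (1 + t) ^ q / (2 ^ (q - 1) * (1 + t ^ q))
  have hf : ContinuousOn f (Set.Icc 0 (1 - c)) := by
    refine ContinuousOn.div ?_ ?_ fun t ht => (hpos t ht.1).ne'
    · exact (Real.continuous_rpow_const (by linarith)).comp_continuousOn (by fun_prop)
    · exact continuousOn_const.mul
        (continuousOn_const.add (Real.continuous_rpow_const (by linarith)).continuousOn)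
  obtain ⟨t₀, ht₀, hmax⟩ := isCompact_Icc.exists_isMaxOn hne hf
  refine ⟨f t₀, (div_lt_one (hpos t₀ ht₀.1)).2 ?_, fun t ht => ?_⟩
  · exact Real.one_add_rpow_lt_mul_one_add_rpow hq ht₀.1 (by linarith [ht₀.2])
  · exact (div_le_iff₀ (hpos t ht.1)).1 (isMaxOn_iff.1 hmax t ht)

theorem exists_lt_one_forall_add_rpow_le {q c : ℝ} (hq : 1 < q) (hc : 0 < c) :
    ∃ θ < 1, ∀ a b : ℝ, 0 ≤ a → 0 ≤ b → b ≤ (1 - c) * a →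
      (a + b) ^ q ≤ θ * (2 ^ (q - 1) * (a ^ q + b ^ q)) := by
  obtain ⟨θ, hθ, h⟩ := exists_lt_one_forall_one_add_rpow_le hq hc
  refine ⟨θ, hθ, fun a b ha hb hba => ?_⟩
  rcases ha.eq_or_lt with rfl | ha
  · obtain rfl : b = 0 := le_antisymm (by simpa using hba) hb
    simp [Real.zero_rpow (by linarith : q ≠ 0)]
  · have ht : b / a ∈ Set.Icc 0 (1 - c) := ⟨div_nonneg hb ha.le, (div_le_iff₀ ha).2 hba⟩
    have hab : b = a * (b / a) := (mul_div_cancel₀ b ha.ne').symm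
    calc (a + b) ^ q = a ^ q * (1 + b / a) ^ q := by
          rw [← Real.mul_rpow ha.le (by positivity), mul_add, mul_one, ← hab]
      _ ≤ a ^ q * (θ * (2 ^ (q - 1) * (1 + (b / a) ^ q))) := by gcongr; exact h _ ht
      _ = θ * (2 ^ (q - 1) * (a ^ q + (a * (b / a)) ^ q)) := by
          rw [Real.mul_rpow ha.le ht.1]; ring
      _ = _ := by rw [← hab]

theorem exists_pos_forall_le_sub_of_rpow_le_sub {q b D : ℝ} (hq : 0 < q) (hb : 0 < b)
    (hD : 0 < D) :
    ∃ δ > 0, ∀ r : ℝ, 0 ≤ r → r ^ q ≤ b ^ q - D → r ≤ b - δ := by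
  set D' := min D (b ^ q)
  have hD' : 0 < D' := lt_min hD (by positivity)
  have hbD' : 0 ≤ b ^ q - D' := sub_nonneg.2 (min_le_right _ _)
  refine ⟨b - (b ^ q - D') ^ q⁻¹, sub_pos.2 ?_, fun r hr hrq => ?_⟩
  · calc (b ^ q - D') ^ q⁻¹ < (b ^ q) ^ q⁻¹ :=
          Real.rpow_lt_rpow hbD' (by linarith) (inv_pos.2 hq)
      _ = b := Real.rpow_rpow_inv hb.le hq.ne'
  · rw [sub_sub_cancel, Real.le_rpow_inv_iff_of_pos hr hbD' hq]
    linarith [min_le_left D (b ^ q)]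

theorem exists_norm_eq_one_smul {E : Type*} [NormedAddCommGroup E] [NormedSpace ℝ E] {x : E}
    (hx : x ≠ 0) : ∃ u : E, ‖u‖ = 1 ∧ x = ‖x‖ • u :=
  ⟨‖x‖⁻¹ • x, by rw [norm_smul, norm_inv, norm_norm, inv_mul_cancel₀ (norm_ne_zero_iff.2 hx)],
    (smul_inv_smul₀ (norm_ne_zero_iff.2 hx) x).symm⟩

theorem norm_add_le_of_forall_sphere {E : Type*} [NormedAddCommGroup E] [NormedSpace ℝ E]
    {ε δ : ℝ} (h : ∀ u v : E, ‖u‖ = 1 → ‖v‖ = 1 → ε ≤ ‖u - v‖ → ‖u + v‖ ≤ 2 * (1 - δ))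
    {x y : E} (hy : y ≠ 0) (hyx : ‖y‖ ≤ ‖x‖) (hxy : ε * ‖x‖ + (‖x‖ - ‖y‖) ≤ ‖x - y‖) :
    ‖x + y‖ ≤ 2 * (1 - δ) * ‖x‖ + (‖x‖ - ‖y‖) := by
  have hx : 0 < ‖x‖ := (norm_pos_iff.2 hy).trans_le hyx
  obtain ⟨u, hu, hxu⟩ := exists_norm_eq_one_smul (norm_pos_iff.1 hx)
  obtain ⟨v, hv, hyv⟩ := exists_norm_eq_one_smul hy
  have hw : ‖(‖x‖ - ‖y‖) • v‖ = ‖x‖ - ‖y‖ := by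
    rw [norm_smul, hv, mul_one, Real.norm_of_nonneg (sub_nonneg.2 hyx)]
  have hsub : x - y = ‖x‖ • (u - v) + (‖x‖ - ‖y‖) • v := by
    rw [show x - y = ‖x‖ • u - ‖y‖ • v by rw [← hxu, ← hyv]]; module
  have hadd : x + y = ‖x‖ • (u + v) - (‖x‖ - ‖y‖) • v := by
    rw [show x + y = ‖x‖ • u + ‖y‖ • v by rw [← hxu, ← hyv]]; module
  have hsub_le : ‖x - y‖ ≤ ‖x‖ * ‖u - v‖ + (‖x‖ - ‖y‖) :=
    calc ‖x - y‖ ≤ ‖‖x‖ • (u - v)‖ + ‖(‖x‖ - ‖y‖) • v‖ := hsub ▸ norm_add_le _ _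
      _ = ‖x‖ * ‖u - v‖ + (‖x‖ - ‖y‖) := by rw [norm_smul, norm_norm, hw]
  have huv : ε ≤ ‖u - v‖ := le_of_mul_le_mul_left (by linarith) hx
  calc ‖x + y‖ ≤ ‖‖x‖ • (u + v)‖ + ‖(‖x‖ - ‖y‖) • v‖ := hadd ▸ norm_sub_le _ _
    _ = ‖x‖ * ‖u + v‖ + (‖x‖ - ‖y‖) := by rw [norm_smul, norm_norm, hw]
    _ ≤ ‖x‖ * (2 * (1 - δ)) + (‖x‖ - ‖y‖) := by gcongr; exact h u v hu hv huv
    _ = _ := by ring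

section EquiUniformConvex

variable {I : Type*} {B : I → Type*} [∀ i, NormedAddCommGroup (B i)]

variable (B) in
def EquiUniformConvex : Prop :=
  ∀ ε : ℝ, 0 < ε → ∃ δ : ℝ, 0 < δ ∧ ∀ i, ∀ x y : B i,
    ‖x‖ = 1 → ‖y‖ = 1 → ε ≤ ‖x - y‖ → ‖x + y‖ ≤ 2 * (1 - δ)

theorem EquiUniformConvex.exists_lt_one_forall_rpow_norm_add_le [∀ i, NormedSpace ℝ (B i)]
    (hB : EquiUniformConvex B) {q : ℝ} (hq : 1 < q) {ε : ℝ} (hε : 0 < ε) :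
    ∃ θ < 1, ∀ i, ∀ x y : B i, ε ^ q * (‖x‖ ^ q + ‖y‖ ^ q) ≤ ‖x - y‖ ^ q →
      ‖x + y‖ ^ q ≤ θ * (2 ^ (q - 1) * (‖x‖ ^ q + ‖y‖ ^ q)) := by
  have hq0 : 0 < q := by linarith
  obtain ⟨δ', hδ', hsphere'⟩ := hB (ε / 2) (half_pos hε)
  obtain ⟨δ, hδ, hδ1, hsphere⟩ : ∃ δ : ℝ, 0 < δ ∧ δ ≤ 1 ∧ ∀ i, ∀ u v : B i,
      ‖u‖ = 1 → ‖v‖ = 1 → ε / 2 ≤ ‖u - v‖ → ‖u + v‖ ≤ 2 * (1 - δ) :=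
    ⟨min δ' 1, lt_min hδ' one_pos, min_le_right _ _, fun i u v hu hv huv =>
      (hsphere' i u v hu hv huv).trans (by gcongr; exact min_le_left _ _)⟩
  obtain ⟨c, hc, hcε, hcδ⟩ : ∃ c : ℝ, 0 < c ∧ c ≤ ε / 2 ∧ c ≤ δ / 2 :=
    ⟨min ε δ / 2, by positivity, by linarith [min_le_left ε δ], by linarith [min_le_right ε δ]⟩
  obtain ⟨θ, hθ, hθ_le⟩ := exists_lt_one_forall_add_rpow_le hq hc
  have hρ : (1 - δ / 2) ^ q < 1 := Real.rpow_lt_one (by linarith) (by linarith) hq0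
  refine ⟨max θ ((1 - δ / 2) ^ q), max_lt hθ hρ, fun i x y hxy => ?_⟩
  wlog hyx : ‖y‖ ≤ ‖x‖ generalizing x y
  · rw [add_comm x, add_comm (‖x‖ ^ q)]
    exact this y x (by rwa [norm_sub_rev, add_comm (‖y‖ ^ q)]) (le_of_not_ge hyx)
  have hεx : ε * ‖x‖ ≤ ‖x - y‖ := by
    refine (Real.rpow_le_rpow_iff (by positivity) (norm_nonneg _) hq0).1 ?_
    rw [Real.mul_rpow hε.le (norm_nonneg _)]
    linarith [mul_nonneg (Real.rpow_nonneg hε.le q) (Real.rpow_nonneg (norm_nonneg y) q)]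
  rcases le_or_gt ‖y‖ ((1 - c) * ‖x‖) with hsmall | hlarge
  · calc ‖x + y‖ ^ q ≤ (‖x‖ + ‖y‖) ^ q :=
          Real.rpow_le_rpow (norm_nonneg _) (norm_add_le x y) hq0.le
      _ ≤ θ * (2 ^ (q - 1) * (‖x‖ ^ q + ‖y‖ ^ q)) :=
          hθ_le _ _ (norm_nonneg _) (norm_nonneg _) hsmall
      _ ≤ _ := by gcongr; exact le_max_left _ _
  · have hy : y ≠ 0 :=
      norm_pos_iff.1 ((mul_nonneg (by linarith) (norm_nonneg x)).trans_lt hlarge)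
    have hxy' : ε / 2 * ‖x‖ + (‖x‖ - ‖y‖) ≤ ‖x - y‖ := by
      linarith [mul_le_mul_of_nonneg_right hcε (norm_nonneg x)]
    have hadd := norm_add_le_of_forall_sphere (hsphere i) hy hyx hxy'
    have hρ_le : ‖x + y‖ ≤ (1 - δ / 2) * (‖x‖ + ‖y‖) := by nlinarith [norm_nonneg x]
    calc ‖x + y‖ ^ q ≤ ((1 - δ / 2) * (‖x‖ + ‖y‖)) ^ q :=
          Real.rpow_le_rpow (norm_nonneg _) hρ_le hq0.le
      _ = (1 - δ / 2) ^ q * (‖x‖ + ‖y‖) ^ q := Real.mul_rpow (by linarith) (by positivity)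
      _ ≤ (1 - δ / 2) ^ q * (2 ^ (q - 1) * (‖x‖ ^ q + ‖y‖ ^ q)) :=
          mul_le_mul_of_nonneg_left (Real.rpow_add_le_mul_rpow_add_rpow (norm_nonneg _)
            (norm_nonneg _) hq.le) (Real.rpow_nonneg (by linarith) _)
      _ ≤ _ := by gcongr; exact le_max_right _ _

theorem EquiUniformConvex.exists_pos_forall_norm_add_rpow_add_mul_le [∀ i, NormedSpace ℝ (B i)]
    (hB : EquiUniformConvex B) {q : ℝ} (hq : 1 < q) {ε : ℝ} (hε : 0 < ε) :
    ∃ η > 0, ∀ i, ∀ x y : B i, ‖x + y‖ ^ q + η * ‖x - y‖ ^ q ≤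
      (2 ^ (q - 1) + η * ε ^ q) * (‖x‖ ^ q + ‖y‖ ^ q) := by
  obtain ⟨θ, hθ, hθ_le⟩ := hB.exists_lt_one_forall_rpow_norm_add_le hq hε
  refine ⟨1 - θ, sub_pos.2 hθ, fun i x y => ?_⟩
  have hmean : ∀ z : B i, ‖z‖ ≤ ‖x‖ + ‖y‖ → ‖z‖ ^ q ≤ 2 ^ (q - 1) * (‖x‖ ^ q + ‖y‖ ^ q) :=
    fun z hz => (Real.rpow_le_rpow (norm_nonneg _) hz (by linarith)).trans
      (Real.rpow_add_le_mul_rpow_add_rpow (norm_nonneg _) (norm_nonneg _) hq.le)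
  have hadd := hmean _ (norm_add_le x y)
  have hsub := hmean _ (norm_sub_le x y)
  have hη : 0 ≤ 1 - θ := by linarith
  have ha : 0 ≤ (1 - θ) * (ε ^ q * (‖x‖ ^ q + ‖y‖ ^ q)) := by positivity
  rcases le_or_gt (ε ^ q * (‖x‖ ^ q + ‖y‖ ^ q)) (‖x - y‖ ^ q) with hfar | hnear
  · linarith [hθ_le i x y hfar, mul_le_mul_of_nonneg_left hsub hη]
  · linarith [mul_le_mul_of_nonneg_left hnear.le hη]

end EquiUniformConvex

theorem lp.norm_add_rpow_add_mul_norm_sub_rpow_le {I : Type*} {B : I → Type*}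
    [∀ i, NormedAddCommGroup (B i)] {p : ℝ≥0∞} [Fact (1 ≤ p)] (hp : p ≠ ⊤) {η C : ℝ}
    (h : ∀ i, ∀ x y : B i, ‖x + y‖ ^ p.toReal + η * ‖x - y‖ ^ p.toReal ≤
      C * (‖x‖ ^ p.toReal + ‖y‖ ^ p.toReal)) (x y : lp B p) :
    ‖x + y‖ ^ p.toReal + η * ‖x - y‖ ^ p.toReal ≤ C * (‖x‖ ^ p.toReal + ‖y‖ ^ p.toReal) := by
  have hp0 : 0 < p.toReal := ENNReal.toReal_pos (zero_lt_one.trans_le Fact.out).ne' hp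
  have hsum : ∀ f : lp B p, Summable fun i => ‖f i‖ ^ p.toReal :=
    fun f => (lp.memℓp f).summable hp0
  simp only [lp.norm_rpow_eq_tsum hp0]
  rw [← tsum_mul_left, ← (hsum _).tsum_add ((hsum _).mul_left _), ← (hsum x).tsum_add (hsum y),
    ← tsum_mul_left]
  refine Summable.tsum_le_tsum (fun i => ?_) ((hsum _).add ((hsum _).mul_left _))
    (((hsum _).add (hsum _)).mul_left _)
  simpa using h i (x i) (y i)

theorem uniformConvexSpace_of_forall_norm_add_rpow_add_mul_le {E : Type*}
    [SeminormedAddCommGroup E] {q : ℝ} (hq : 1 ≤ q)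
    (h : ∀ ε > 0, ∃ η > 0, ∀ x y : E, ‖x + y‖ ^ q + η * ‖x - y‖ ^ q ≤
      (2 ^ (q - 1) + η * ε ^ q) * (‖x‖ ^ q + ‖y‖ ^ q)) :
    UniformConvexSpace E := by
  refine ⟨fun ε hε => ?_⟩
  obtain ⟨η, hη, hxy_le⟩ := h (ε / 4) (by positivity)
  obtain ⟨δ, hδ, hroot⟩ := exists_pos_forall_le_sub_of_rpow_le_sub (q := q) (by linarith) two_pos
    (show 0 < η * ε ^ q / 2 by positivity)
  refine ⟨δ, hδ, fun x hx y hy hxy => hroot _ (norm_nonneg _) ?_⟩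
  have hquarter : (ε / 4) ^ q ≤ ε ^ q / 4 := by
    rw [Real.div_rpow hε.le (by norm_num)]
    gcongr
    simpa using Real.rpow_le_rpow_of_exponent_le (by norm_num : (1 : ℝ) ≤ 4) hq
  have hdist : ε ^ q ≤ ‖x - y‖ ^ q := Real.rpow_le_rpow hε.le hxy (by linarith)
  have htwo : (2 : ℝ) ^ (q - 1) * 2 = 2 ^ q := by
    rw [Real.rpow_sub_one two_ne_zero, div_mul_cancel₀ _ two_ne_zero]
  have hsphere := hxy_le x y
  rw [hx, hy, Real.one_rpow] at hsphere
  linarith [mul_le_mul_of_nonneg_left hquarter hη.le, mul_le_mul_of_nonneg_left hdist hη.le]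

theorem uniformConvex_lp_of_common_modulus_general {I : Type*} (B : I → Type*)
    [∀ i, NormedAddCommGroup (B i)] [∀ i, NormedSpace ℝ (B i)]
    (hcommon : ∀ ε : ℝ, 0 < ε → ∃ δ : ℝ, 0 < δ ∧ ∀ i, ∀ x y : B i,
        ‖x‖ = 1 → ‖y‖ = 1 → ε ≤ ‖x - y‖ → ‖x + y‖ ≤ 2 * (1 - δ))
    (p : ℝ≥0∞) [Fact (1 ≤ p)] (hp1 : 1 < p) (hp2 : p ≠ ⊤) :
    UniformConvexSpace (lp B p) := by
  have hq : 1 < p.toReal := by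
    simpa using (ENNReal.toReal_lt_toReal ENNReal.one_ne_top hp2).2 hp1
  refine uniformConvexSpace_of_forall_norm_add_rpow_add_mul_le hq.le fun ε hε => ?_
  obtain ⟨η, hη, h⟩ :=
    EquiUniformConvex.exists_pos_forall_norm_add_rpow_add_mul_le hcommon hq hε
  exact ⟨η, hη, lp.norm_add_rpow_add_mul_norm_sub_rpow_le hp2 h⟩

/-- Generalized Day theorem: the ℓᵖ-direct sum (`1 < p < ∞`) of an arbitrary family of
uniformly convex Banach spaces with a common modulus of convexity is uniformly convex. -/
theorem uniformConvex_lp_of_common_modulus {I : Type*} (B : I → Type*)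
    [∀ i, NormedAddCommGroup (B i)] [∀ i, NormedSpace ℝ (B i)] [∀ i, CompleteSpace (B i)]
    (hUC : ∀ i, UniformConvexSpace (B i))
    (hcommon : ∀ ε : ℝ, 0 < ε → ∃ δ : ℝ, 0 < δ ∧ ∀ i, ∀ x y : B i,
        ‖x‖ = 1 → ‖y‖ = 1 → ε ≤ ‖x - y‖ → ‖x + y‖ ≤ 2 * (1 - δ))
    (p : ℝ≥0∞) [Fact (1 ≤ p)] (hp1 : 1 < p) (hp2 : p ≠ ⊤) :
    UniformConvexSpace (lp B p) :=
  uniformConvex_lp_of_common_modulus_general B hcommon p hp1 hp2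
end
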